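/- Let q = p^r be an odd prime power, where p is an odd prime and r ≥ 1. Then for every subset S ⊆ [2q−1], the descent set statistic satisfies β_{2q}(S) ≡ (−1)^{|S ∖ {q}|} (mod p), where |S ∖ {q}| is the cardinality of S with the element q removed. -/

import Mathlib

/-- The descent set of a permutation of `Fin n`, as a subset of `[n-1] = {1,…,n-1}`
(1-based positions): `i` is a descent if `π(i) > π(i+1)`. -/
def descentSet (n : ℕ) (π : Equiv.Perm (Fin n)) : Finset ℕ :=
  (Finset.Ico 1 n).filter fun i => ∀ h : i < n, π ⟨i, h⟩ < π ⟨i - 1, by omega⟩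

/-- The descent set statistic `β_n(S)`: the number of permutations of `{1,…,n}`
with descent set `S`. -/
def beta (n : ℕ) (S : Finset ℕ) : ℕ :=
  (Finset.univ.filter fun π : Equiv.Perm (Fin n) => descentSet n π = S).card

/-- The descent set polynomial `Q_n(t) = ∑_{S ⊆ [n-1]} t^{β_n(S)}`. -/
noncomputable def Q (n : ℕ) : Polynomial ℤ :=
  ∑ S ∈ (Finset.Ico 1 n).powerset, Polynomial.X ^ beta n S

/-!
Write `α_n(T)` for the number of permutations whose descent set lies in `T`, so that
`β_n(S) = ∑_{T ⊆ S} (-1)^{|S ∖ T|} α_n(T)` by Möbius inversion on the Boolean lattice. If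
`s = min T`, such a permutation lists an `s`-set of values in increasing order and then arranges
the remaining values with descents in `T' = (T ∖ {s}) - s`, so `α_n(T) = C(n, s) α_{n-s}(T')`.
Since `(1 + X)^{2q} = (1 + X^q)^2` over `𝔽_p`, `C(2q, s)` vanishes mod `p` unless `s = q`, and
`C(q, s')` vanishes for `0 < s' < q`. Hence `α_{2q}(T) ≡ [T = ∅] + 2 [T = {q}]`, which is
`∑_{U ⊆ T} (-1)^{|U ∖ {q}|}`, and inverting gives `β_{2q}(S) ≡ (-1)^{|S ∖ {q}|}`.
-/

open Finset Equiv

section PowersetInversion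

variable {α R : Type*} [DecidableEq α] [CommRing R]

lemma sum_powerset_neg_one_pow_card' (x : Finset α) :
    ∑ m ∈ x.powerset, (-1 : R) ^ #m = if x = ∅ then 1 else 0 := by
  exact_mod_cast congrArg (Int.cast : ℤ → R) (sum_powerset_neg_one_pow_card (x := x))

lemma sum_Icc_neg_one_pow_card_sdiff {U S : Finset α} (hUS : U ⊆ S) :
    ∑ T ∈ Icc U S, (-1 : R) ^ #(S \ T) = if U = S then 1 else 0 := by
  rw [sum_nbij' (S \ ·) (S \ ·) (t := (S \ U).powerset) (g := fun W => (-1 : R) ^ #W)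
    (fun T hT => by grind) (fun W hW => by grind)
    (fun T hT => Finset.sdiff_sdiff_eq_self (mem_Icc.1 hT).2)
    (fun W hW => Finset.sdiff_sdiff_eq_self ((mem_powerset.1 hW).trans sdiff_subset))
    (fun _ _ => rfl), sum_powerset_neg_one_pow_card']
  refine if_congr ?_ rfl rfl
  rw [sdiff_eq_empty_iff_subset]
  exact ⟨hUS.antisymm, fun h => h ▸ subset_rfl⟩

theorem sum_neg_one_pow_card_sdiff_mul_sum_powerset (f : Finset α → R) (S : Finset α) :
    ∑ T ∈ S.powerset, (-1 : R) ^ #(S \ T) * ∑ U ∈ T.powerset, f U = f S := by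
  simp_rw [mul_sum]
  rw [sum_comm' (t' := S.powerset) (s' := fun U => Icc U S) (fun T U => by grind)]
  simp_rw [← sum_mul]
  rw [sum_congr rfl fun U hU => by
    rw [sum_Icc_neg_one_pow_card_sdiff (mem_powerset.1 hU), ite_mul, one_mul, zero_mul]]
  simp

lemma sum_powerset_neg_one_pow_card_erase (a : α) (T : Finset α) :
    ∑ U ∈ T.powerset, (-1 : R) ^ #(U.erase a) = if T = ∅ then 1 else if T = {a} then 2 else 0 := by
  by_cases ha : a ∈ T
  · obtain ⟨T, haT, rfl⟩ : ∃ T', a ∉ T' ∧ T = insert a T' :=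
      ⟨T.erase a, notMem_erase a T, (insert_erase ha).symm⟩
    have hU : ∀ U ∈ T.powerset, U.erase a = U ∧ (insert a U).erase a = U := fun U hU =>
      have haU : a ∉ U := fun h => haT (mem_powerset.1 hU h)
      ⟨erase_eq_of_notMem haU, erase_insert haU⟩
    rw [sum_powerset_insert haT,
      sum_congr rfl fun U h => congrArg (fun V => (-1 : R) ^ #V) (hU U h).1,
      sum_congr rfl fun U h => congrArg (fun V => (-1 : R) ^ #V) (hU U h).2,
      ← two_mul, sum_powerset_neg_one_pow_card']
    have hTa : insert a T = {a} ↔ T = ∅ :=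
      ⟨fun h => eq_empty_of_forall_notMem fun x hx =>
        haT (mem_singleton.1 (h ▸ mem_insert_of_mem hx) ▸ hx), fun h => h ▸ rfl⟩
    rw [if_neg (insert_ne_empty a T), if_congr hTa rfl rfl, mul_ite, mul_one, mul_zero]
  · rw [sum_congr rfl fun U hU => congrArg (fun V => (-1 : R) ^ #V)
      (erase_eq_of_notMem fun h => ha (mem_powerset.1 hU h)), sum_powerset_neg_one_pow_card',
      if_neg fun (h : T = {a}) => ha (h ▸ mem_singleton_self a)]

end PowersetInversion

def alpha (n : ℕ) (T : Finset ℕ) : ℕ :=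
  #{π : Perm (Fin n) | descentSet n π ⊆ T}

lemma alpha_eq_sum_beta (n : ℕ) (T : Finset ℕ) : alpha n T = ∑ U ∈ T.powerset, beta n U := by
  rw [alpha, card_eq_sum_card_fiberwise (f := descentSet n) (t := T.powerset)
    fun π hπ => mem_powerset.2 (mem_filter.1 hπ).2]
  refine sum_congr rfl fun U hU => ?_
  rw [beta, filter_filter]
  congr 1
  exact filter_congr fun π _ => ⟨And.right, fun h => ⟨h ▸ mem_powerset.1 hU, h⟩⟩

lemma beta_eq_sum_alpha {R : Type*} [CommRing R] (n : ℕ) (S : Finset ℕ) :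
    (beta n S : R) = ∑ T ∈ S.powerset, (-1) ^ #(S \ T) * (alpha n T : R) := by
  simp_rw [alpha_eq_sum_beta, Nat.cast_sum]
  exact (sum_neg_one_pow_card_sdiff_mul_sum_powerset (fun U => (beta n U : R)) S).symm

section Descents

variable {n : ℕ} {π : Perm (Fin n)}

lemma mem_descentSet {i : ℕ} (h1 : 1 ≤ i) (h : i < n) :
    i ∈ descentSet n π ↔ π ⟨i, h⟩ < π ⟨i - 1, by omega⟩ := by
  simp [descentSet, h1, h]

lemma apply_pred_lt_of_notMem_descentSet {i : ℕ} (h1 : 1 ≤ i) (h : i < n)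
    (hi : i ∉ descentSet n π) : π ⟨i - 1, by omega⟩ < π ⟨i, h⟩ := by
  rw [mem_descentSet h1 h, not_lt] at hi
  exact hi.lt_of_ne (π.injective.ne (by simp only [ne_eq, Fin.mk.injEq]; omega))

lemma apply_lt_apply_of_forall_notMem_descentSet {a b : Fin n} (hab : a < b)
    (h : ∀ i ∈ descentSet n π, i ≤ a ∨ b < i) : π a < π b := by
  obtain ⟨a, ha⟩ := a
  obtain ⟨b, hb⟩ := b
  simp only [Fin.mk_lt_mk] at hab h
  induction b, hab using Nat.le_induction with
  | base =>
    simpa using apply_pred_lt_of_notMem_descentSet (π := π) (i := a + 1) (by omega) hb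
      fun hmem => by have := h _ hmem; omega
  | succ k hk ih =>
    refine (ih (by omega) fun i hi => ?_).trans ?_
    · have := h i hi; omega
    · simpa using apply_pred_lt_of_notMem_descentSet (π := π) (i := k + 1) (by omega) hb
        fun hmem => by have := h _ hmem; omega

lemma descentSet_eq_empty_iff : descentSet n π = ∅ ↔ π = 1 := by
  refine ⟨fun h => ?_, fun h => ?_⟩
  · have hmono : StrictMono π := fun a b hab =>
      apply_lt_apply_of_forall_notMem_descentSet hab (by simp [h])
    exact Equiv.ext (congrFun hmono.eq_id)
  · ext i
    simp only [descentSet, h, mem_filter, mem_Ico, Perm.coe_one, id, Fin.mk_lt_mk]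
    simp only [notMem_empty, iff_false]
    omega

end Descents

lemma alpha_empty (n : ℕ) : alpha n ∅ = 1 := by
  simp [alpha, descentSet_eq_empty_iff, filter_eq']

lemma Finset.exists_perm_orderEmbOfFin_apply_eq {α : Type*} [LinearOrder α] {W : Finset α} {m : ℕ}
    (hW : #W = m) {f : Fin m → α} (hf : Function.Injective f) (hfW : ∀ j, f j ∈ W) :
    ∃ σ : Perm (Fin m), ∀ j, W.orderEmbOfFin hW (σ j) = f j := by
  let g : Fin m → Fin m := fun j => (W.orderIsoOfFin hW).symm ⟨f j, hfW j⟩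
  have hg : Function.Injective g := fun a b hab =>
    hf (by simpa using congrArg Subtype.val ((W.orderIsoOfFin hW).symm.injective hab))
  exact ⟨ofBijective g hg.bijective_of_finite, fun j => by
    simp [g, ← coe_orderIsoOfFin_apply]⟩

section PrependSorted

variable {s m : ℕ} {V : Finset (Fin (s + m))} (hV : #V = s) (σ : Perm (Fin m))

lemma card_compl_eq_of_card_eq (hV : #V = s) : #Vᶜ = m := by
  simp [card_compl, hV]

noncomputable def prependSorted : Perm (Fin (s + m)) :=
  Equiv.ofBijective
    (Fin.append (V.orderEmbOfFin hV) (Vᶜ.orderEmbOfFin (card_compl_eq_of_card_eq hV) ∘ σ)) <| by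
    refine Function.Injective.bijective_of_finite (Fin.append_injective_iff.2
      ⟨(V.orderEmbOfFin hV).injective, (RelEmbedding.injective _).comp σ.injective,
        fun i j hij => ?_⟩)
    exact mem_compl.1 (orderEmbOfFin_mem _ _ _) (hij ▸ orderEmbOfFin_mem V hV i)

@[simp]
lemma prependSorted_castAdd (i : Fin s) :
    prependSorted hV σ (Fin.castAdd m i) = V.orderEmbOfFin hV i := by
  simp [prependSorted]

@[simp]
lemma prependSorted_natAdd (j : Fin m) :
    prependSorted hV σ (Fin.natAdd s j) = Vᶜ.orderEmbOfFin (card_compl_eq_of_card_eq hV) (σ j) := by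
  simp [prependSorted]

lemma notMem_descentSet_prependSorted {i : ℕ} (hi : i < s) :
    i ∉ descentSet (s + m) (prependSorted hV σ) := by
  intro h
  have h1 : 1 ≤ i := (mem_Ico.1 (mem_filter.1 h).1).1
  rw [mem_descentSet h1 (by omega)] at h
  change prependSorted hV σ (Fin.castAdd m ⟨i, hi⟩) <
    prependSorted hV σ (Fin.castAdd m ⟨i - 1, by omega⟩) at h
  simp only [prependSorted_castAdd, OrderEmbedding.lt_iff_lt, Fin.mk_lt_mk] at h
  omega

lemma add_mem_descentSet_prependSorted {j : ℕ} (hj : 1 ≤ j) :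
    s + j ∈ descentSet (s + m) (prependSorted hV σ) ↔ j ∈ descentSet m σ := by
  by_cases hjm : j < m
  · rw [mem_descentSet (by omega) (by omega), mem_descentSet hj hjm]
    have hpred : (⟨s + j - 1, by omega⟩ : Fin (s + m)) = Fin.natAdd s ⟨j - 1, by omega⟩ :=
      Fin.ext (by simp only [Fin.natAdd_mk]; omega)
    rw [hpred]
    change prependSorted hV σ (Fin.natAdd s ⟨j, hjm⟩) < _ ↔ _
    simp only [prependSorted_natAdd, OrderEmbedding.lt_iff_lt]
  · simp only [descentSet, mem_filter, mem_Ico, add_lt_add_iff_left]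
    omega

lemma descentSet_prependSorted_subset_iff {T : Finset ℕ} (hsT : s ∈ T) (hmin : ∀ t ∈ T, s ≤ t) :
    descentSet (s + m) (prependSorted hV σ) ⊆ T ↔ descentSet m σ ⊆ (T.erase s).image (· - s) := by
  refine ⟨fun h j hj => ?_, fun h i hi => ?_⟩
  · have hj1 : 1 ≤ j := (mem_Ico.1 (mem_filter.1 hj).1).1
    have := h ((add_mem_descentSet_prependSorted hV σ hj1).2 hj)
    exact mem_image.2 ⟨s + j, mem_erase.2 ⟨by omega, this⟩, by omega⟩
  · rcases lt_trichotomy i s with his | rfl | his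
    · exact absurd hi (notMem_descentSet_prependSorted hV σ his)
    · exact hsT
    · obtain ⟨j, rfl⟩ : ∃ j, i = s + j := ⟨i - s, by omega⟩
      have hj := (add_mem_descentSet_prependSorted hV σ (by omega)).1 hi
      obtain ⟨t, ht, htj⟩ := mem_image.1 (h hj)
      obtain ⟨-, ht⟩ := mem_erase.1 ht
      obtain rfl : t = s + j := by have := hmin t ht; omega
      exact ht

lemma image_prependSorted_castAdd : univ.image (prependSorted hV σ ∘ Fin.castAdd m) = V := by
  simp [Function.comp_def, image_orderEmbOfFin_univ]

lemma prependSorted_inj {W : Finset (Fin (s + m))} (hW : #W = s) {τ : Perm (Fin m)} :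
    prependSorted hV σ = prependSorted hW τ ↔ V = W ∧ σ = τ := by
  refine ⟨fun h => ?_, by rintro ⟨rfl, rfl⟩; rfl⟩
  obtain rfl : V = W := by
    rw [← image_prependSorted_castAdd hV σ, h, image_prependSorted_castAdd]
  refine ⟨rfl, Equiv.ext fun j => ?_⟩
  simpa using congr($h (Fin.natAdd s j))

lemma exists_prependSorted_eq (π : Perm (Fin (s + m))) (hπ : StrictMono (π ∘ Fin.castAdd m)) :
    ∃ (V : Finset (Fin (s + m))) (hV : #V = s) (σ : Perm (Fin m)), prependSorted hV σ = π := by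
  set V := univ.image (π ∘ Fin.castAdd m)
  have hV : #V = s := by
    rw [card_image_of_injective _ hπ.injective, card_univ, Fintype.card_fin]
  have hfirst : ⇑(V.orderEmbOfFin hV) = π ∘ Fin.castAdd m :=
    (orderEmbOfFin_unique hV (fun i => mem_image_of_mem _ (mem_univ i)) hπ).symm
  obtain ⟨σ, hσ⟩ := exists_perm_orderEmbOfFin_apply_eq (card_compl_eq_of_card_eq hV)
    (f := π ∘ Fin.natAdd s) (π.injective.comp (Fin.natAdd_injective m s))
    fun j => mem_compl.2 fun hj => by
      obtain ⟨i, -, hij⟩ := mem_image.1 hj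
      have := Fin.ext_iff.1 (π.injective hij)
      simp only [Fin.val_castAdd, Fin.val_natAdd] at this
      omega
  refine ⟨V, hV, σ, Equiv.ext fun i => ?_⟩
  induction i using Fin.addCases with
  | left i => simp [hfirst]
  | right j => simp [hσ]

end PrependSorted

lemma alpha_add_eq_choose_mul {s m : ℕ} {T : Finset ℕ} (hsT : s ∈ T) (hmin : ∀ t ∈ T, s ≤ t) :
    alpha (s + m) T = (s + m).choose s * alpha m ((T.erase s).image (· - s)) := by
  have hchoose : (s + m).choose s = #((univ : Finset (Fin (s + m))).powersetCard s) := by simp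
  rw [alpha, alpha, hchoose, ← card_product]
  symm
  refine card_bij (fun p hp => prependSorted (mem_powersetCard_univ.1 (mem_product.1 hp).1) p.2)
    (fun p hp => ?_) (fun p hp q hq h => ?_) (fun π hπ => ?_)
  · simp only [mem_product, mem_filter, mem_univ, true_and] at hp ⊢
    exact (descentSet_prependSorted_subset_iff _ _ hsT hmin).2 hp.2
  · exact Prod.ext_iff.2 ((prependSorted_inj _ _ _).1 h)
  · have hπT : descentSet (s + m) π ⊆ T := (mem_filter.1 hπ).2
    have hmono : StrictMono (π ∘ Fin.castAdd m) := fun a b hab =>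
      apply_lt_apply_of_forall_notMem_descentSet hab fun i hi => by
        have := hmin i (hπT hi); simp only [Fin.val_castAdd]; omega
    obtain ⟨V, hV, σ, rfl⟩ := exists_prependSorted_eq π hmono
    refine ⟨(V, σ), ?_, rfl⟩
    simp only [mem_product, mem_filter, mem_univ, true_and, mem_powersetCard_univ]
    exact ⟨hV, (descentSet_prependSorted_subset_iff hV σ hsT hmin).1 hπT⟩

section MinDescent

variable {n : ℕ} {T : Finset ℕ}

lemma alpha_eq_choose_min'_mul (hT : T ⊆ Ico 1 n) (hne : T.Nonempty) :
    alpha n T = n.choose (T.min' hne) *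
      alpha (n - T.min' hne) ((T.erase (T.min' hne)).image (· - T.min' hne)) := by
  obtain ⟨m, rfl⟩ : ∃ m, n = T.min' hne + m := ⟨n - T.min' hne, by
    have := mem_Ico.1 (hT (min'_mem T hne)); omega⟩
  rw [Nat.add_sub_cancel_left]
  exact alpha_add_eq_choose_mul (min'_mem T hne) fun t ht => min'_le T t ht

lemma image_erase_min'_sub_subset_Ico (hT : T ⊆ Ico 1 n) (hne : T.Nonempty) :
    (T.erase (T.min' hne)).image (· - T.min' hne) ⊆ Ico 1 (n - T.min' hne) := by
  intro x hx
  obtain ⟨t, ht, rfl⟩ := mem_image.1 hx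
  obtain ⟨hts, ht⟩ := mem_erase.1 ht
  have := min'_le T t ht
  have := mem_Ico.1 (hT ht)
  rw [mem_Ico]
  omega

end MinDescent

section PrimePower

open Polynomial

variable {p r : ℕ}

lemma cast_choose_two_mul_prime_pow (hp : p.Prime) {k : ℕ} (hk0 : k ≠ 0) (hk : k ≠ 2 * p ^ r) :
    ((2 * p ^ r).choose k : ZMod p) = if k = p ^ r then 2 else 0 := by
  have := Fact.mk hp
  have hfrob : (X + 1 : (ZMod p)[X]) ^ (2 * p ^ r) = X ^ (2 * p ^ r) + 2 * X ^ p ^ r + 1 := by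
    rw [mul_comm, pow_mul, add_pow_char_pow, one_pow]
    ring
  rw [← coeff_X_add_one_pow, hfrob]
  simp [coeff_X_pow, coeff_one, hk0, hk]

lemma prime_dvd_alpha_prime_pow (hp : p.Prime) {T : Finset ℕ} (hT : T ⊆ Ico 1 (p ^ r))
    (hne : T.Nonempty) : p ∣ alpha (p ^ r) T := by
  have := mem_Ico.1 (hT (min'_mem T hne))
  exact (hp.dvd_choose_pow (by omega) (by omega)).trans
    (alpha_eq_choose_min'_mul hT hne ▸ dvd_mul_right _ _)

lemma cast_alpha_two_mul_prime_pow (hp : p.Prime) {T : Finset ℕ} (hT : T ⊆ Ico 1 (2 * p ^ r)) :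
    (alpha (2 * p ^ r) T : ZMod p) = if T = ∅ then 1 else if T = {p ^ r} then 2 else 0 := by
  rcases T.eq_empty_or_nonempty with rfl | hne
  · simp [alpha_empty]
  have hmin := mem_Ico.1 (hT (min'_mem T hne))
  rw [if_neg hne.ne_empty, alpha_eq_choose_min'_mul hT hne, Nat.cast_mul,
    cast_choose_two_mul_prime_pow hp (by omega) (by omega)]
  split_ifs with hsq hTq hTq
  · simp [hTq, alpha_empty]
  · have hne' : ((T.erase (T.min' hne)).image (· - T.min' hne)).Nonempty := by
      refine Nonempty.image (nonempty_iff_ne_empty.2 ?_) _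
      rw [Ne, erase_eq_empty_iff, not_or, hsq]
      exact ⟨hne.ne_empty, hTq⟩
    have hsub := image_erase_min'_sub_subset_Ico hT hne
    have h2q : 2 * p ^ r - p ^ r = p ^ r := by omega
    rw [hsq, h2q] at hsub
    rw [hsq] at hne'
    rw [hsq, h2q, (ZMod.natCast_eq_zero_iff _ _).2 (prime_dvd_alpha_prime_pow hp hsub hne'),
      mul_zero]
  · simp [hTq] at hsq
  · rw [zero_mul]

end PrimePower

theorem beta_two_q_mod_p_general (p r : ℕ) (hp : p.Prime)
    (S : Finset ℕ) (hS : S ⊆ Finset.Ico 1 (2 * p ^ r)) :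
    (beta (2 * p ^ r) S : ℤ) ≡ (-1) ^ (S.erase (p ^ r)).card [ZMOD (p : ℤ)] := by
  rw [← ZMod.intCast_eq_intCast_iff]
  push_cast
  rw [beta_eq_sum_alpha, ← sum_neg_one_pow_card_sdiff_mul_sum_powerset
    (fun U => (-1 : ZMod p) ^ #(U.erase (p ^ r))) S]
  refine sum_congr rfl fun T hT => ?_
  rw [cast_alpha_two_mul_prime_pow hp ((mem_powerset.1 hT).trans hS),
    sum_powerset_neg_one_pow_card_erase]

/-- For an odd prime power `q = p^r` and any `S ⊆ [2q - 1]`, the descent set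
statistic satisfies `β_{2q}(S) ≡ (-1)^{|S ∖ {q}|} (mod p)`. -/
theorem beta_two_q_mod_p (p r : ℕ) (hp : p.Prime) (hpodd : Odd p) (hr : 1 ≤ r)
    (S : Finset ℕ) (hS : S ⊆ Finset.Ico 1 (2 * p ^ r)) :
    (beta (2 * p ^ r) S : ℤ) ≡ (-1) ^ (S.erase (p ^ r)).card [ZMOD (p : ℤ)] :=
  beta_two_q_mod_p_general p r hp S hS
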